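/- arXiv:0809.3106 — 3 statements merged into one kernel-verified Lean document; each statement's English description precedes it below -/
import Mathlib

section
/- Let φ ∈ L^∞(X,m), n ∈ ℕ, ε > 0, and let D be a measurable partition of unity on X such that for each g ∈ D the essential oscillation of the Birkhoff sum S_nφ = φ + φ∘α + ⋯ + φ∘α^{n−1} over the support of g does not exceed ε. Then for every α-invariant measure μ ∈ M_α(X,m), ε + ln‖A_φⁿ‖ ≥ μ(S_nφ) + τ_n(μ,D). -/
open MeasureTheory Filter Topology
open scoped Classical ENNReal NNReal

noncomputable section

namespace TEntropyPaper

variable {X : Type*} [MeasurableSpace X]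

/-- The mapping `α` is measurable and the shift operator `A f = f ∘ α` is bounded on
`L¹(X, m)`; equivalently `m (α⁻¹ G) ≤ C · m G` for all measurable `G`. -/
def ShiftBounded (m : Measure X) (α : X → X) : Prop :=
  Measurable α ∧ ∃ C : ℝ≥0, ∀ s : Set X, MeasurableSet s → m (α ⁻¹' s) ≤ (C : ℝ≥0∞) * m s

/-- A positive normalized linear functional on `L^∞(X, m)`, encoded as a real-valued
map on functions `X → ℝ` which is linear and positive on essentially bounded
(strongly) measurable functions, respects `m`-a.e. equality, takes the value `1` at the
constant function `1` and (as a normalization) vanishes on functions not in `L^∞`. -/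
structure PosFunctional (m : Measure X) where
  toFun : (X → ℝ) → ℝ
  map_add' : ∀ f g : X → ℝ, MemLp f ⊤ m → MemLp g ⊤ m → toFun (f + g) = toFun f + toFun g
  map_smul' : ∀ (c : ℝ) (f : X → ℝ), MemLp f ⊤ m → toFun (c • f) = c * toFun f
  nonneg' : ∀ f : X → ℝ, MemLp f ⊤ m → (0 : X → ℝ) ≤ᵐ[m] f → 0 ≤ toFun f
  map_one' : toFun (fun _ => 1) = 1
  congr_ae' : ∀ f g : X → ℝ, MemLp f ⊤ m → MemLp g ⊤ m → f =ᵐ[m] g → toFun f = toFun g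
  zero_of_ne' : ∀ f : X → ℝ, ¬ MemLp f ⊤ m → toFun f = 0

/-- Evaluation of a functional in `M(X,m)` against the `L^∞` test functions. -/
def evalMap (m : Measure X) (μ : PosFunctional m) : {f : X → ℝ // MemLp f ⊤ m} → ℝ :=
  fun f => μ.toFun f.1

/-- The weak-* topology on `M(X,m)`: the topology of pointwise convergence on `L^∞`
test functions. -/
instance (m : Measure X) : TopologicalSpace (PosFunctional m) :=
  TopologicalSpace.induced (evalMap m) inferInstance

/-- `α`-invariance of a functional `μ ∈ M(X,m)`: `μ(f ∘ α) = μ(f)`. -/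
def PosFunctional.Invariant (α : X → X) {m : Measure X} (μ : PosFunctional m) : Prop :=
  ∀ f : X → ℝ, MemLp f ⊤ m → μ.toFun (f ∘ α) = μ.toFun f

/-- A measurable partition of unity on `X`: a finite set of nonnegative functions in
`L^∞(X,m)` summing to `1` almost everywhere. -/
def IsPartUnity (m : Measure X) (D : Finset (X → ℝ)) : Prop :=
  (∀ g ∈ D, MemLp g ⊤ m ∧ (0 : X → ℝ) ≤ᵐ[m] g) ∧ ∀ᵐ x ∂m, ∑ g ∈ D, g x = 1

/-- Birkhoff sum `S_n φ = φ + φ∘α + ⋯ + φ∘α^{n-1}`. -/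
def birkhoff (α : X → X) (φ : X → ℝ) (n : ℕ) (x : X) : ℝ :=
  ∑ i ∈ Finset.range n, φ (α^[i] x)

/-- The unit sphere of `L¹(X,m)`. -/
def UnitL1 (m : Measure X) : Set (X → ℝ) := {f | Integrable f m ∧ ∫ x, |f x| ∂m = 1}

/-- The integral `∫_X g · |f ∘ αⁿ| dm`. -/
def wInt (m : Measure X) (α : X → X) (n : ℕ) (g f : X → ℝ) : ℝ :=
  ∫ x, g x * |f (α^[n] x)| ∂m

/-- The summand `w · ln((∫_X g·|f∘αⁿ| dm)/w)` in the definition of `t`-entropy,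
with values in `EReal`: it is `0` when `w = 0` and `-∞` when the integral vanishes
while `w ≠ 0`. -/
def tauTermR (m : Measure X) (α : X → X) (n : ℕ) (w : ℝ) (f g : X → ℝ) : EReal :=
  if w = 0 then 0
  else if wInt m α n g f = 0 then ⊥
  else ((w * Real.log (wInt m α n g f / w) : ℝ) : EReal)

/-- `τ_n(w, D)` for an abstract weight function `w` on the elements of `D`. -/
def tauNDW (m : Measure X) (α : X → X) (n : ℕ) (D : Finset (X → ℝ))
    (w : (X → ℝ) → ℝ) : EReal :=
  if ∃ g ∈ D, (∫⁻ x, ENNReal.ofReal (g x) ∂m) = 0 ∧ 0 < w g then ⊥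
  else ⨆ f ∈ UnitL1 m, ∑ g ∈ D, tauTermR m α n (w g) f g

/-- `τ_n(μ, D)` for `μ ∈ M(X,m)` and a measurable partition of unity `D`. -/
def tauND (m : Measure X) (α : X → X) (μ : PosFunctional m) (n : ℕ)
    (D : Finset (X → ℝ)) : EReal :=
  tauNDW m α n D (fun g => μ.toFun g)

/-- `τ_n(μ) = inf_D τ_n(μ, D)` over all measurable partitions of unity `D`. -/
def tauN (m : Measure X) (α : X → X) (μ : PosFunctional m) (n : ℕ) : EReal :=
  ⨅ D ∈ {D : Finset (X → ℝ) | IsPartUnity m D}, tauND m α μ n D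

/-- The `t`-entropy `τ(μ) = inf_{n ≥ 1} τ_n(μ)/n`. -/
def tEntropy (m : Measure X) (α : X → X) (μ : PosFunctional m) : EReal :=
  ⨅ n : {k : ℕ // 0 < k}, ((((n : ℕ) : ℝ)⁻¹ : ℝ) : EReal) * tauN m α μ (n : ℕ)

/-- The operator norm `‖A_φⁿ‖` of the `n`-th power of the weighted shift operator
`A_φ f = e^φ · (f ∘ α)` on `L¹(X,m)`, i.e. the supremum of `∫ e^{S_nφ}|f∘αⁿ| dm`
over the unit sphere of `L¹`. -/
def weightedOpNorm (m : Measure X) (α : X → X) (φ : X → ℝ) (n : ℕ) : ℝ :=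
  sSup {r : ℝ | ∃ f ∈ UnitL1 m,
    r = ∫ x, Real.exp (birkhoff α φ n x) * |f (α^[n] x)| ∂m}

/-- `D_m`: the elements of `D` which are not `m`-a.e. zero (i.e. `∫ g dm > 0`). -/
def Dm (m : Measure X) (D : Finset (X → ℝ)) : Finset (X → ℝ) :=
  D.filter (fun g => (∫⁻ x, ENNReal.ofReal (g x) ∂m) ≠ 0)

/-- The simplex `M(D)` of probability measures on the finite set `D`, realized as
weight functions vanishing outside `D`. -/
def MD (D : Finset (X → ℝ)) : Set ((X → ℝ) → ℝ) :=
  {w | (∀ g ∈ D, 0 ≤ w g) ∧ (∑ g ∈ D, w g) = 1 ∧ ∀ g ∉ D, w g = 0}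

/-- The sum `Σ_{g ∈ D_m} w(g)·ln((∫ g·|f∘αⁿ| dm)/w(g))`. -/
def tauSumDm (m : Measure X) (α : X → X) (n : ℕ) (D : Finset (X → ℝ))
    (w : (X → ℝ) → ℝ) (f : X → ℝ) : EReal :=
  ∑ g ∈ Dm m D, tauTermR m α n (w g) f g

/-- `τ_n(w, D)` with the sum restricted to `D_m`, for `w ∈ M(D_m)`. -/
def tauDm (m : Measure X) (α : X → X) (n : ℕ) (D : Finset (X → ℝ))
    (w : (X → ℝ) → ℝ) : EReal :=
  ⨆ f ∈ UnitL1 m, tauSumDm m α n D w f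

/-- `w'` is an optimizing limit for `(w, n, D)`: there is a sequence of nonnegative
unit-norm `f_i ∈ L¹(X,m)` along which the supremum defining `τ_n(w,D)` is attained in
the limit and `w'(g) = lim_i ∫ g·(f_i∘αⁿ) dm` for each `g ∈ D_m`. -/
def IsOptLimit (m : Measure X) (α : X → X) (n : ℕ) (D : Finset (X → ℝ))
    (w w' : (X → ℝ) → ℝ) : Prop :=
  ∃ F : ℕ → (X → ℝ),
    (∀ i, F i ∈ UnitL1 m ∧ (0 : X → ℝ) ≤ᵐ[m] F i) ∧
    (∀ g ∈ Dm m D, Tendsto (fun i => wInt m α n g (F i)) atTop (𝓝 (w' g))) ∧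
    Tendsto (fun i => tauSumDm m α n D w (F i)) atTop (𝓝 (tauDm m α n D w))

/-! On the support of `g ∈ D` the Birkhoff sum `S = S_nφ` lies in `[c_g, c_g + ε]`. Testing
`μ` against the partition `D` gives `μ(S) ≤ Σ_g μ(g) c_g + ε`, and for every unit vector `f` of
`L¹` the same splitting gives `Σ_g e^{c_g} ∫ g |f∘αⁿ| ≤ ∫ e^S |f∘αⁿ| ≤ ‖A_φⁿ‖`. The Gibbs
inequality `Σ_g w_g (ln (a_g / w_g) + c_g) ≤ ln Σ_g e^{c_g} a_g` for the probability weights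
`w_g = μ(g)` (concavity of `ln`) then bounds the sum defining `τ_n(μ, D)` by
`ln ‖A_φⁿ‖ - Σ_g μ(g) c_g`, and the two estimates add up to the claim. -/

theorem sum_mul_log_div_add_le_log_sum_exp_mul {ι : Type*} {s : Finset ι} {w I c : ι → ℝ}
    (hw : ∀ i ∈ s, 0 < w i) (hw1 : ∑ i ∈ s, w i = 1) (hI : ∀ i ∈ s, 0 < I i) :
    ∑ i ∈ s, w i * (Real.log (I i / w i) + c i) ≤ Real.log (∑ i ∈ s, Real.exp (c i) * I i) := by
  have hJensen := strictConcaveOn_log_Ioi.concaveOn.le_map_sum (fun i hi => (hw i hi).le) hw1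
    (p := fun i => Real.exp (c i) * I i / w i)
    fun i hi => Set.mem_Ioi.2 (by have := hw i hi; have := hI i hi; positivity)
  calc ∑ i ∈ s, w i * (Real.log (I i / w i) + c i)
      = ∑ i ∈ s, w i * Real.log (Real.exp (c i) * I i / w i) :=
        Finset.sum_congr rfl fun i hi => by
          have := hw i hi; have := hI i hi
          rw [mul_div_assoc, Real.log_mul (Real.exp_ne_zero _) (by positivity), Real.log_exp,
            add_comm]
    _ ≤ Real.log (∑ i ∈ s, w i * (Real.exp (c i) * I i / w i)) := hJensen
    _ = Real.log (∑ i ∈ s, Real.exp (c i) * I i) := by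
        congr 1
        exact Finset.sum_congr rfl fun i hi => mul_div_cancel₀ _ (hw i hi).ne'

theorem EReal.coe_finset_sum {ι : Type*} (s : Finset ι) (r : ι → ℝ) :
    ((∑ i ∈ s, r i : ℝ) : EReal) = ∑ i ∈ s, (r i : EReal) :=
  map_sum (⟨⟨(↑), EReal.coe_zero⟩, EReal.coe_add⟩ : ℝ →+ EReal) r s

theorem sum_ite_mul_log_div_le {ι : Type*} {s : Finset ι} {w I c : ι → ℝ} {B : ℝ}
    (hw0 : ∀ i ∈ s, 0 ≤ w i) (hw1 : ∑ i ∈ s, w i = 1) (hI0 : ∀ i ∈ s, 0 ≤ I i)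
    (hB : ∑ i ∈ s, Real.exp (c i) * I i ≤ B) :
    ∑ i ∈ s, (if w i = 0 then (0 : EReal) else if I i = 0 then ⊥
      else ((w i * Real.log (I i / w i) : ℝ) : EReal))
      ≤ ((Real.log B - ∑ i ∈ s, w i * c i : ℝ) : EReal) := by
  classical
  by_cases hbot : ∃ i ∈ s, w i ≠ 0 ∧ I i = 0
  · obtain ⟨i, hi, hwi, hIi⟩ := hbot
    rw [← Finset.add_sum_erase s _ hi, if_neg hwi, if_pos hIi, EReal.bot_add]
    exact bot_le
  push Not at hbot
  set t := s.filter (fun i => w i ≠ 0)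
  have ht : ∀ i ∈ t, 0 < w i ∧ 0 < I i := fun i hi => by
    obtain ⟨his, hwi⟩ := Finset.mem_filter.1 hi
    exact ⟨(hw0 i his).lt_of_ne' hwi, (hI0 i his).lt_of_ne' (hbot i his hwi)⟩
  have ht1 : ∑ i ∈ t, w i = 1 := by rw [Finset.sum_filter_ne_zero, hw1]
  have hsum : ∑ i ∈ s, (if w i = 0 then (0 : EReal) else if I i = 0 then ⊥
      else ((w i * Real.log (I i / w i) : ℝ) : EReal))
      = ((∑ i ∈ t, w i * Real.log (I i / w i) : ℝ) : EReal) := by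
    rw [EReal.coe_finset_sum, Finset.sum_filter]
    refine Finset.sum_congr rfl fun i hi => ?_
    by_cases hwi : w i = 0
    · simp [hwi]
    · simp [hwi, hbot i hi hwi]
  have hwc : ∑ i ∈ t, w i * c i = ∑ i ∈ s, w i * c i :=
    Finset.sum_filter_of_ne fun i _ h => left_ne_zero_of_mul h
  have hGibbs := sum_mul_log_div_add_le_log_sum_exp_mul (c := c) (fun i hi => (ht i hi).1) ht1
    fun i hi => (ht i hi).2
  have htB : ∑ i ∈ t, Real.exp (c i) * I i ≤ B :=
    (Finset.sum_le_sum_of_subset_of_nonneg (Finset.filter_subset _ s)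
      fun i hi _ => by have := hI0 i hi; positivity).trans hB
  have htpos : 0 < ∑ i ∈ t, Real.exp (c i) * I i := by
    have htne : t.Nonempty := Finset.nonempty_of_sum_ne_zero (by rw [ht1]; exact one_ne_zero)
    exact Finset.sum_pos (fun i hi => by have := (ht i hi).2; positivity) htne
  rw [hsum, EReal.coe_le_coe_iff, ← hwc]
  simp only [mul_add, Finset.sum_add_distrib] at hGibbs
  linarith [Real.log_le_log htpos htB]

theorem exists_ae_abs_le_of_memLp_top {m : Measure X} {f : X → ℝ} (hf : MemLp f ⊤ m) :
    ∃ K : ℝ, ∀ᵐ x ∂m, |f x| ≤ K := by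
  refine ⟨(eLpNormEssSup f m).toReal, ?_⟩
  have hfin : eLpNormEssSup f m ≠ ⊤ := by simpa using hf.2.ne
  filter_upwards [ae_le_eLpNormEssSup (f := f) (μ := m)] with x hx
  simpa [Real.norm_eq_abs] using ENNReal.toReal_mono hfin hx

theorem memLp_top_exp {m : Measure X} {f : X → ℝ} (hf : MemLp f ⊤ m) :
    MemLp (fun x => Real.exp (f x)) ⊤ m := by
  obtain ⟨K, hK⟩ := exists_ae_abs_le_of_memLp_top hf
  refine memLp_top_of_bound (Real.continuous_exp.comp_aestronglyMeasurable hf.1) (Real.exp K) ?_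
  filter_upwards [hK] with x hx
  rw [Real.norm_eq_abs, abs_of_pos (Real.exp_pos _)]
  exact Real.exp_le_exp.2 (le_of_abs_le hx)

section Nonsingular

variable {m : Measure X} {T : X → X} {c : ℝ≥0}

theorem memLp_comp_of_map_le_smul {p : ℝ≥0∞} {f : X → ℝ} (hT : Measurable T)
    (hle : m.map T ≤ (c : ℝ≥0∞) • m) (hf : MemLp f p m) : MemLp (f ∘ T) p m :=
  (hf.of_measure_le_smul ENNReal.coe_ne_top hle).comp_of_map hT.aemeasurable

theorem integral_abs_comp_le_of_map_le_smul (hT : Measurable T)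
    (hle : m.map T ≤ (c : ℝ≥0∞) • m) {f : X → ℝ} (hf : Integrable f m) :
    ∫ x, |f (T x)| ∂m ≤ c * ∫ x, |f x| ∂m := by
  have hfT : AEStronglyMeasurable f (m.map T) :=
    hf.1.mono_ac (Measure.absolutelyContinuous_of_le_smul hle)
  rw [← integral_map hT.aemeasurable (continuous_abs.comp_aestronglyMeasurable hfT)]
  calc ∫ y, |f y| ∂(m.map T) ≤ ∫ y, |f y| ∂((c : ℝ≥0∞) • m) :=
        integral_mono_measure hle (ae_of_all _ fun _ => abs_nonneg _)
          (hf.abs.smul_measure ENNReal.coe_ne_top)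
    _ = c * ∫ x, |f x| ∂m := by rw [integral_smul_measure]; rfl

end Nonsingular

section ShiftBounded

variable {m : Measure X} {α : X → X}

theorem ShiftBounded.map_le_smul (hα : ShiftBounded m α) :
    ∃ C : ℝ≥0, m.map α ≤ (C : ℝ≥0∞) • m := by
  obtain ⟨hmeas, C, hC⟩ := hα
  refine ⟨C, Measure.le_iff.2 fun s hs => ?_⟩
  rw [Measure.map_apply hmeas hs, Measure.smul_apply, smul_eq_mul]
  exact hC s hs

theorem ShiftBounded.map_iterate_le_smul (hα : ShiftBounded m α) (k : ℕ) :
    ∃ c : ℝ≥0, m.map α^[k] ≤ (c : ℝ≥0∞) • m := by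
  obtain ⟨C, hC⟩ := hα.map_le_smul
  induction k with
  | zero => exact ⟨1, by simp⟩
  | succ k ih =>
    obtain ⟨c, hc⟩ := ih
    refine ⟨c * C, ?_⟩
    calc m.map α^[k + 1] = (m.map α).map α^[k] := by
          rw [Function.iterate_succ, Measure.map_map (hα.1.iterate k) hα.1]
      _ ≤ ((C : ℝ≥0∞) • m).map α^[k] := Measure.map_mono hC (hα.1.iterate k)
      _ = (C : ℝ≥0∞) • m.map α^[k] := Measure.map_smul _ _ _
      _ ≤ (C : ℝ≥0∞) • (c : ℝ≥0∞) • m := by gcongr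
      _ = ((c * C : ℝ≥0) : ℝ≥0∞) • m := by rw [smul_smul, mul_comm]; norm_cast

theorem ShiftBounded.memLp_top_birkhoff (hα : ShiftBounded m α) {φ : X → ℝ}
    (hφ : MemLp φ ⊤ m) (n : ℕ) : MemLp (birkhoff α φ n) ⊤ m :=
  memLp_finsetSum _ fun i _ =>
    have ⟨_, hc⟩ := hα.map_iterate_le_smul i
    memLp_comp_of_map_le_smul (hα.1.iterate i) hc hφ

theorem ShiftBounded.integrable_comp_iterate (hα : ShiftBounded m α) (k : ℕ) {f : X → ℝ}
    (hf : Integrable f m) : Integrable (fun x => f (α^[k] x)) m := by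
  obtain ⟨_, hc⟩ := hα.map_iterate_le_smul k
  rw [← memLp_one_iff_integrable] at hf ⊢
  exact memLp_comp_of_map_le_smul (hα.1.iterate k) hc hf

theorem ShiftBounded.exists_integral_mul_abs_comp_iterate_le (hα : ShiftBounded m α)
    {F : X → ℝ} (hF : MemLp F ⊤ m) (k : ℕ) :
    ∃ B : ℝ, ∀ f : X → ℝ, Integrable f m →
      ∫ x, F x * |f (α^[k] x)| ∂m ≤ B * ∫ x, |f x| ∂m := by
  obtain ⟨c, hc⟩ := hα.map_iterate_le_smul k
  obtain ⟨K, hK⟩ := exists_ae_abs_le_of_memLp_top hF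
  refine ⟨|K| * c, fun f hf => ?_⟩
  have hfk := (hα.integrable_comp_iterate k hf).abs
  calc ∫ x, F x * |f (α^[k] x)| ∂m ≤ ∫ x, |K| * |f (α^[k] x)| ∂m :=
        integral_mono_ae (hfk.mul_of_top_right hF) (hfk.const_mul _) <| by
          filter_upwards [hK] with x hx
          exact mul_le_mul_of_nonneg_right ((le_abs_self _).trans (hx.trans (le_abs_self K)))
            (abs_nonneg _)
    _ = |K| * ∫ x, |f (α^[k] x)| ∂m := integral_const_mul _ _
    _ ≤ |K| * (c * ∫ x, |f x| ∂m) :=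
        mul_le_mul_of_nonneg_left (integral_abs_comp_le_of_map_le_smul (hα.1.iterate k) hc hf)
          (abs_nonneg K)
    _ = |K| * c * ∫ x, |f x| ∂m := by ring

theorem ShiftBounded.integral_le_weightedOpNorm (hα : ShiftBounded m α) {φ : X → ℝ}
    (hφ : MemLp φ ⊤ m) (n : ℕ) {f : X → ℝ} (hf : f ∈ UnitL1 m) :
    ∫ x, Real.exp (birkhoff α φ n x) * |f (α^[n] x)| ∂m ≤ weightedOpNorm m α φ n := by
  obtain ⟨B, hB⟩ :=
    hα.exists_integral_mul_abs_comp_iterate_le (memLp_top_exp (hα.memLp_top_birkhoff hφ n)) n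
  -- `weightedOpNorm` is an `sSup` of reals, which is junk (`0`) unless the set is bounded above.
  refine le_csSup ⟨B, ?_⟩ ⟨f, hf, rfl⟩
  rintro r ⟨f, hf, rfl⟩
  simpa [hf.2] using hB f hf.1

end ShiftBounded

section PosFunctional

variable {m : Measure X} (μ : PosFunctional m)

theorem PosFunctional.map_zero : μ.toFun 0 = 0 := by
  simpa using μ.map_smul' 0 (fun _ => 1) (memLp_top_const 1)

theorem PosFunctional.mono {f g : X → ℝ} (hf : MemLp f ⊤ m) (hg : MemLp g ⊤ m)
    (hfg : f ≤ᵐ[m] g) : μ.toFun f ≤ μ.toFun g := by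
  have hsplit := μ.map_add' f (g - f) hf (hg.sub hf)
  rw [add_sub_cancel] at hsplit
  have := μ.nonneg' (g - f) (hg.sub hf) (hfg.mono fun x hx => sub_nonneg.2 hx)
  linarith

theorem PosFunctional.map_finset_sum {ι : Type*} (s : Finset ι) {F : ι → X → ℝ}
    (hF : ∀ i ∈ s, MemLp (F i) ⊤ m) : μ.toFun (∑ i ∈ s, F i) = ∑ i ∈ s, μ.toFun (F i) := by
  classical
  induction s using Finset.induction_on with
  | empty => simpa using μ.map_zero
  | insert a s ha ih =>
    rw [Finset.forall_mem_insert] at hF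
    rw [Finset.sum_insert ha, Finset.sum_insert ha,
      μ.map_add' _ _ hF.1 (memLp_finsetSum' s hF.2), ih hF.2]

theorem PosFunctional.sum_map_mul_eq {D : Finset (X → ℝ)} (hD : IsPartUnity m D) {F : X → ℝ}
    (hF : MemLp F ⊤ m) : ∑ g ∈ D, μ.toFun (fun x => g x * F x) = μ.toFun F := by
  have hgF : ∀ g ∈ D, MemLp (fun x => g x * F x) ⊤ m := fun g hg => hF.mul' (hD.1 g hg).1
  rw [← μ.map_finset_sum D hgF]
  refine μ.congr_ae' _ _ (memLp_finsetSum' D hgF) hF ?_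
  filter_upwards [hD.2] with x hx
  simp [Finset.sum_apply, ← Finset.sum_mul, hx]

theorem PosFunctional.sum_eq_one {D : Finset (X → ℝ)} (hD : IsPartUnity m D) :
    ∑ g ∈ D, μ.toFun g = 1 := by
  simpa [μ.map_one'] using μ.sum_map_mul_eq hD (memLp_top_const 1)

theorem PosFunctional.le_sum_mul {D : Finset (X → ℝ)} (hD : IsPartUnity m D) {F : X → ℝ}
    (hF : MemLp F ⊤ m) {b : (X → ℝ) → ℝ} (hb : ∀ g ∈ D, ∀ᵐ x ∂m, g x ≠ 0 → F x ≤ b g) :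
    μ.toFun F ≤ ∑ g ∈ D, b g * μ.toFun g := by
  rw [← μ.sum_map_mul_eq hD hF]
  refine Finset.sum_le_sum fun g hg => ?_
  rw [← μ.map_smul' _ _ (hD.1 g hg).1]
  refine μ.mono (hF.mul' (hD.1 g hg).1) ((hD.1 g hg).1.const_smul _) ?_
  filter_upwards [(hD.1 g hg).2, hb g hg] with x hgx hFx
  by_cases h0 : g x = 0
  · simp [h0]
  · simpa [mul_comm (b g)] using mul_le_mul_of_nonneg_left (hFx h0) (hgx : 0 ≤ g x)

end PosFunctional

theorem IsPartUnity.sum_mul_integral_le {m : Measure X} {D : Finset (X → ℝ)}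
    (hD : IsPartUnity m D) {F h : X → ℝ} (hh : Integrable h m) (hh0 : 0 ≤ᵐ[m] h)
    (hFh : Integrable (fun x => F x * h x) m) {b : (X → ℝ) → ℝ}
    (hb : ∀ g ∈ D, ∀ᵐ x ∂m, g x ≠ 0 → b g ≤ F x) :
    ∑ g ∈ D, b g * ∫ x, g x * h x ∂m ≤ ∫ x, F x * h x ∂m := by
  have hgFh : ∀ g ∈ D, Integrable (fun x => g x * (F x * h x)) m :=
    fun g hg => hFh.mul_of_top_right (hD.1 g hg).1
  have hsplit : ∫ x, F x * h x ∂m = ∑ g ∈ D, ∫ x, g x * (F x * h x) ∂m := by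
    rw [← integral_finsetSum D hgFh]
    refine integral_congr_ae ?_
    filter_upwards [hD.2] with x hx
    rw [← Finset.sum_mul, hx, one_mul]
  rw [hsplit]
  refine Finset.sum_le_sum fun g hg => ?_
  rw [← integral_const_mul]
  refine integral_mono_ae ((hh.mul_of_top_right (hD.1 g hg).1).const_mul _) (hgFh g hg) ?_
  filter_upwards [(hD.1 g hg).2, hb g hg, hh0] with x hgx hbx hhx
  by_cases h0 : g x = 0
  · simp [h0]
  · calc b g * (g x * h x) = g x * (b g * h x) := by ring
      _ ≤ g x * (F x * h x) :=
        mul_le_mul_of_nonneg_left (mul_le_mul_of_nonneg_right (hbx h0) hhx) hgx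

theorem ShiftBounded.sum_tauTermR_le {m : Measure X} {α : X → X} (hα : ShiftBounded m α)
    {φ : X → ℝ} (hφ : MemLp φ ⊤ m) (n : ℕ) {D : Finset (X → ℝ)} (hD : IsPartUnity m D)
    (μ : PosFunctional m) {c : (X → ℝ) → ℝ}
    (hc : ∀ g ∈ D, ∀ᵐ x ∂m, g x ≠ 0 → c g ≤ birkhoff α φ n x) {f : X → ℝ}
    (hf : f ∈ UnitL1 m) :
    ∑ g ∈ D, tauTermR m α n (μ.toFun g) f g
      ≤ ((Real.log (weightedOpNorm m α φ n) - ∑ g ∈ D, μ.toFun g * c g : ℝ) : EReal) := by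
  have hfn := (hα.integrable_comp_iterate n hf.1).abs
  refine sum_ite_mul_log_div_le (fun g hg => μ.nonneg' g (hD.1 g hg).1 (hD.1 g hg).2)
    (μ.sum_eq_one hD) (fun g hg => integral_nonneg_of_ae ?_) ?_
  · filter_upwards [(hD.1 g hg).2] with x hx
    exact mul_nonneg hx (abs_nonneg _)
  · calc ∑ g ∈ D, Real.exp (c g) * wInt m α n g f
        ≤ ∫ x, Real.exp (birkhoff α φ n x) * |f (α^[n] x)| ∂m :=
          hD.sum_mul_integral_le hfn (ae_of_all _ fun _ => abs_nonneg _)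
            (hfn.mul_of_top_right (memLp_top_exp (hα.memLp_top_birkhoff hφ n)))
            fun g hg => (hc g hg).mono fun x hx hgx => Real.exp_le_exp.2 (hx hgx)
      _ ≤ weightedOpNorm m α φ n := hα.integral_le_weightedOpNorm hφ n hf

theorem eps_add_log_norm_ge_general
    (m : Measure X) (α : X → X) (hα : ShiftBounded m α)
    (φ : X → ℝ) (hφ : MemLp φ ⊤ m) (n : ℕ) (ε : ℝ)
    (D : Finset (X → ℝ)) (hD : IsPartUnity m D)
    (hosc : ∀ g ∈ D, ∃ c : ℝ, ∀ᵐ x ∂m, g x ≠ 0 → birkhoff α φ n x ∈ Set.Icc c (c + ε))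
    (μ : PosFunctional m) :
    (μ.toFun (birkhoff α φ n) : EReal) + tauND m α μ n D
      ≤ ((ε + Real.log (weightedOpNorm m α φ n) : ℝ) : EReal) := by
  choose! c hc using hosc
  have hμS : μ.toFun (birkhoff α φ n) ≤ ∑ g ∈ D, μ.toFun g * c g + ε :=
    calc μ.toFun (birkhoff α φ n) ≤ ∑ g ∈ D, (c g + ε) * μ.toFun g :=
          μ.le_sum_mul hD (hα.memLp_top_birkhoff hφ n)
            fun g hg => (hc g hg).mono fun x hx hgx => (hx hgx).2
      _ = ∑ g ∈ D, μ.toFun g * c g + ε := by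
          simp only [add_mul, Finset.sum_add_distrib, ← Finset.mul_sum, μ.sum_eq_one hD, mul_one,
            mul_comm]
  have hτ := fun f (hf : f ∈ UnitL1 m) => hα.sum_tauTermR_le hφ n hD μ
    (fun g hg => (hc g hg).mono fun x hx hgx => (hx hgx).1) hf
  rw [tauND, tauNDW]
  split_ifs
  · simp
  · grw [iSup₂_le hτ, ← EReal.coe_add, EReal.coe_le_coe_iff]
    linarith

/-- If the essential oscillation of the Birkhoff sum `S_nφ` over the support of every
element of the measurable partition of unity `D` does not exceed `ε`, then for every
`α`-invariant `μ ∈ M_α(X,m)` one has `ε + ln‖A_φⁿ‖ ≥ μ(S_nφ) + τ_n(μ, D)`. -/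
theorem eps_add_log_norm_ge
    (m : Measure X) [SigmaFinite m] (α : X → X) (hα : ShiftBounded m α)
    (φ : X → ℝ) (hφ : MemLp φ ⊤ m) (n : ℕ) (hn : 0 < n) (ε : ℝ) (hε : 0 < ε)
    (D : Finset (X → ℝ)) (hD : IsPartUnity m D)
    (hosc : ∀ g ∈ D, ∃ c : ℝ, ∀ᵐ x ∂m, g x ≠ 0 → birkhoff α φ n x ∈ Set.Icc c (c + ε))
    (μ : PosFunctional m) (hμ : μ.Invariant α) :
    (μ.toFun (birkhoff α φ n) : EReal) + tauND m α μ n D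
      ≤ ((ε + Real.log (weightedOpNorm m α φ n) : ℝ) : EReal) :=
  eps_add_log_norm_ge_general m α hα φ hφ n ε D hD hosc μ

end TEntropyPaper
end
end

section
/- The function φ ↦ λ(φ), the logarithm of the spectral radius of the weighted shift operator A_φ, is convex on L^∞(X,m). -/
open MeasureTheory Filter Topology
open scoped Classical ENNReal NNReal

noncomputable section

namespace TEntropyPaper

variable {X : Type*} [MeasurableSpace X]

/-! Pointwise, `e^{S_n(tφ + (1-t)ψ)} |f ∘ αⁿ| = (e^{S_n φ} |f ∘ αⁿ|)^t (e^{S_n ψ} |f ∘ αⁿ|)^{1-t}`,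
so Hölder's inequality with exponents `1/t` and `1/(1-t)`, followed by a supremum over the unit
sphere of `L¹`, gives `‖A_{tφ+(1-t)ψ}ⁿ‖ ≤ ‖A_φⁿ‖^t ‖A_ψⁿ‖^{1-t}`. Taking logarithms, dividing
by `n` and letting `n → ∞` yields the convexity of `λ`. The norms are finite because `φ, ψ` are
essentially bounded and `α` is nonsingular, and for `m ≠ 0` they are positive (so that the
logarithms behave) because `m` is σ-finite: a normalized indicator of a set of finite measure
whose preimage under `αⁿ` is not null is a unit vector `f` with `A_ρⁿ f ≠ 0`. -/

namespace ShiftBounded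

variable {m : Measure X} {α : X → X}

theorem quasiMeasurePreserving (hα : ShiftBounded m α) : Measure.QuasiMeasurePreserving α m m := by
  obtain ⟨hmeas, C, hC⟩ := hα
  refine ⟨hmeas, Measure.AbsolutelyContinuous.mk fun s hs hs0 => ?_⟩
  rw [Measure.map_apply hmeas hs]
  simpa [hs0] using hC s hs

theorem exists_map_iterate_le (hα : ShiftBounded m α) :
    ∃ C : ℝ≥0, ∀ n : ℕ, m.map (α^[n]) ≤ ((C : ℝ≥0∞) ^ n) • m := by
  obtain ⟨hmeas, C, hC⟩ := hα
  have hmap : m.map α ≤ (C : ℝ≥0∞) • m := Measure.le_iff.2 fun s hs => by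
    simpa [Measure.map_apply hmeas hs] using hC s hs
  refine ⟨C, fun n => ?_⟩
  induction n with
  | zero => simp
  | succ n ih =>
    calc m.map (α^[n + 1]) = (m.map α).map (α^[n]) := by
          rw [Measure.map_map (hmeas.iterate n) hmeas, Function.iterate_succ]
      _ ≤ ((C : ℝ≥0∞) • m).map (α^[n]) := Measure.map_mono hmap (hmeas.iterate n)
      _ ≤ ((C : ℝ≥0∞) ^ (n + 1)) • m := by
          rw [Measure.map_smul, pow_succ', mul_smul]
          gcongr

theorem exists_lintegral_comp_iterate_le (hα : ShiftBounded m α) :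
    ∃ C : ℝ≥0, ∀ (n : ℕ) {g : X → ℝ≥0∞}, AEMeasurable g m →
      ∫⁻ x, g (α^[n] x) ∂m ≤ (C : ℝ≥0∞) ^ n * ∫⁻ x, g x ∂m := by
  obtain ⟨C, hC⟩ := hα.exists_map_iterate_le
  refine ⟨C, fun n g hg => ?_⟩
  have hqmp := hα.quasiMeasurePreserving.iterate n
  rw [← lintegral_map' (hg.mono_ac hqmp.absolutelyContinuous) hqmp.aemeasurable,
    ← smul_eq_mul, ← lintegral_smul_measure]
  exact lintegral_mono' (hC n) le_rfl

end ShiftBounded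

theorem birkhoff_smul_add_smul {Y : Type*} {α : Y → Y} (a b : ℝ) (φ ψ : Y → ℝ) (n : ℕ) (x : Y) :
    birkhoff α (a • φ + b • ψ) n x = a * birkhoff α φ n x + b * birkhoff α ψ n x := by
  simp [birkhoff, Finset.mul_sum, Finset.sum_add_distrib]

section Birkhoff

variable {m : Measure X} {α : X → X}

theorem aestronglyMeasurable_birkhoff (hα : Measure.QuasiMeasurePreserving α m m) {ρ : X → ℝ}
    (hρ : AEStronglyMeasurable ρ m) (n : ℕ) : AEStronglyMeasurable (birkhoff α ρ n) m :=
  Finset.aestronglyMeasurable_fun_sum _ fun i _ =>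
    hρ.comp_quasiMeasurePreserving (hα.iterate i)

theorem ae_abs_birkhoff_le (hα : Measure.QuasiMeasurePreserving α m m) {ρ : X → ℝ} {M : ℝ}
    (hρ : ∀ᵐ x ∂m, |ρ x| ≤ M) (n : ℕ) : ∀ᵐ x ∂m, |birkhoff α ρ n x| ≤ n * M := by
  have hall : ∀ᵐ x ∂m, ∀ i : ℕ, |ρ (α^[i] x)| ≤ M :=
    ae_all_iff.2 fun i => (hα.iterate i).ae hρ
  filter_upwards [hall] with x hx
  calc |birkhoff α ρ n x| ≤ ∑ i ∈ Finset.range n, |ρ (α^[i] x)| := Finset.abs_sum_le_sum_abs _ _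
    _ ≤ ∑ _i ∈ Finset.range n, M := Finset.sum_le_sum fun i _ => hx i
    _ = n * M := by simp

end Birkhoff

theorem indicator_mem_unitL1 {m : Measure X} {s : Set X} (hs : MeasurableSet s) (h0 : m s ≠ 0)
    (htop : m s ≠ ⊤) : s.indicator (fun _ => (m s).toReal⁻¹) ∈ UnitL1 m := by
  have hpos : 0 < (m s).toReal := ENNReal.toReal_pos h0 htop
  refine ⟨(integrable_indicator_iff hs).2 (integrableOn_const htop), ?_⟩
  have habs : (fun x => |s.indicator (fun _ => (m s).toReal⁻¹) x|)
      = s.indicator (fun _ => (m s).toReal⁻¹) := by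
    ext x
    exact abs_of_nonneg (Set.indicator_nonneg (fun _ _ => (inv_pos.2 hpos).le) x)
  rw [habs, integral_indicator_const _ hs, smul_eq_mul, measureReal_def,
    mul_inv_cancel₀ hpos.ne']

theorem exists_mem_unitL1_comp_iterate_not_ae_zero {m : Measure X} [SigmaFinite m] [NeZero m]
    {α : X → X} (hα : Measure.QuasiMeasurePreserving α m m) (n : ℕ) :
    ∃ f ∈ UnitL1 m, ¬ (f ∘ α^[n] =ᵐ[m] 0) := by
  have hcover : (⋃ k, α^[n] ⁻¹' spanningSets m k) = Set.univ := by
    rw [← Set.preimage_iUnion, iUnion_spanningSets, Set.preimage_univ]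
  obtain ⟨k, hk⟩ : ∃ k, m (α^[n] ⁻¹' spanningSets m k) ≠ 0 := by
    by_contra! h
    have := measure_iUnion_null h
    rw [hcover, Measure.measure_univ_eq_zero] at this
    exact NeZero.ne m this
  set s := spanningSets m k
  have h0 : m s ≠ 0 := fun h => hk ((hα.iterate n).preimage_null h)
  refine ⟨_, indicator_mem_unitL1 (measurableSet_spanningSets m k) h0
    (measure_spanningSets_lt_top m k).ne, ?_⟩
  have hcomp : s.indicator (fun _ => (m s).toReal⁻¹) ∘ α^[n]
      = (α^[n] ⁻¹' s).indicator (fun _ => (m s).toReal⁻¹) := rfl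
  rw [hcomp, Set.indicator_ae_eq_zero]
  simpa [Function.support_const (inv_ne_zero (ENNReal.toReal_pos h0
    (measure_spanningSets_lt_top m k).ne).ne')] using hk

theorem ofReal_exp_convexComb_mul (a b : ℝ) {c t : ℝ} (hc : 0 ≤ c) (ht0 : 0 ≤ t) (ht1 : t ≤ 1) :
    ENNReal.ofReal (Real.exp (t * a + (1 - t) * b) * c)
      = ENNReal.ofReal (Real.exp a * c) ^ t * ENNReal.ofReal (Real.exp b * c) ^ (1 - t) := by
  have ht1' : 0 ≤ 1 - t := sub_nonneg.2 ht1
  have hreal : Real.exp (t * a + (1 - t) * b) * c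
      = (Real.exp a * c) ^ t * (Real.exp b * c) ^ (1 - t) := by
    rw [Real.mul_rpow (Real.exp_nonneg a) hc, Real.mul_rpow (Real.exp_nonneg b) hc,
      ← Real.exp_mul, ← Real.exp_mul]
    calc Real.exp (t * a + (1 - t) * b) * c
        = Real.exp (a * t) * Real.exp (b * (1 - t)) * c ^ (t + (1 - t)) := by
          rw [← Real.exp_add, add_sub_cancel, Real.rpow_one]; ring_nf
      _ = _ := by rw [Real.rpow_add_of_nonneg hc ht0 ht1']; ring
  rw [hreal, ENNReal.ofReal_mul (by positivity), ENNReal.ofReal_rpow_of_nonneg (by positivity) ht0,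
    ENNReal.ofReal_rpow_of_nonneg (by positivity) ht1']

def weightedLintegral (m : Measure X) (α : X → X) (ρ : X → ℝ) (n : ℕ) (f : X → ℝ) : ℝ≥0∞ :=
  ∫⁻ x, ENNReal.ofReal (Real.exp (birkhoff α ρ n x) * |f (α^[n] x)|) ∂m

section WeightedIntegral

variable {m : Measure X} {α : X → X} {ρ f : X → ℝ}

theorem aestronglyMeasurable_weightedIntegrand (hα : Measure.QuasiMeasurePreserving α m m)
    (hρ : AEStronglyMeasurable ρ m) (hf : AEStronglyMeasurable f m) (n : ℕ) :
    AEStronglyMeasurable (fun x => Real.exp (birkhoff α ρ n x) * |f (α^[n] x)|) m :=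
  (Real.continuous_exp.comp_aestronglyMeasurable (aestronglyMeasurable_birkhoff hα hρ n)).mul
    (hf.comp_quasiMeasurePreserving (hα.iterate n)).norm

theorem integral_eq_toReal_weightedLintegral (hα : Measure.QuasiMeasurePreserving α m m)
    (hρ : AEStronglyMeasurable ρ m) (hf : AEStronglyMeasurable f m) (n : ℕ) :
    ∫ x, Real.exp (birkhoff α ρ n x) * |f (α^[n] x)| ∂m = (weightedLintegral m α ρ n f).toReal :=
  integral_eq_lintegral_of_nonneg_ae (.of_forall fun _ => by positivity)
    (aestronglyMeasurable_weightedIntegrand hα hρ hf n)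

theorem weightedLintegral_eq_zero_iff (hα : Measure.QuasiMeasurePreserving α m m)
    (hρ : AEStronglyMeasurable ρ m) (hf : AEStronglyMeasurable f m) (n : ℕ) :
    weightedLintegral m α ρ n f = 0 ↔ f ∘ α^[n] =ᵐ[m] 0 := by
  rw [weightedLintegral, lintegral_eq_zero_iff'
    (aestronglyMeasurable_weightedIntegrand hα hρ hf n).aemeasurable.ennreal_ofReal]
  refine Filter.eventually_congr (.of_forall fun x => ?_)
  simp [ENNReal.ofReal_eq_zero, (Real.exp_pos _).not_ge, Real.exp_nonneg]

theorem exists_weightedLintegral_le (hα : ShiftBounded m α) (hρ : MemLp ρ ⊤ m) (n : ℕ) :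
    ∃ K : ℝ≥0∞, K ≠ ⊤ ∧ ∀ f ∈ UnitL1 m, weightedLintegral m α ρ n f ≤ K := by
  obtain ⟨C, hC⟩ := hα.exists_lintegral_comp_iterate_le
  set M := lpNorm ρ ⊤ m
  have hS : ∀ᵐ x ∂m, |birkhoff α ρ n x| ≤ n * M :=
    ae_abs_birkhoff_le hα.quasiMeasurePreserving (ae_le_lpNorm_exponent_top hρ) n
  refine ⟨ENNReal.ofReal (Real.exp (n * M)) * (C : ℝ≥0∞) ^ n, by finiteness, fun f hf => ?_⟩
  have hnorm : ∫⁻ x, ENNReal.ofReal |f x| ∂m = 1 := by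
    rw [← ofReal_integral_eq_lintegral_ofReal hf.1.abs (.of_forall fun _ => abs_nonneg _), hf.2,
      ENNReal.ofReal_one]
  calc weightedLintegral m α ρ n f
      ≤ ∫⁻ x, ENNReal.ofReal (Real.exp (n * M)) * ENNReal.ofReal |f (α^[n] x)| ∂m := by
        refine lintegral_mono_ae ?_
        filter_upwards [hS] with x hx
        rw [← ENNReal.ofReal_mul (Real.exp_nonneg _)]
        gcongr
        exact (le_abs_self _).trans hx
    _ = ENNReal.ofReal (Real.exp (n * M)) * ∫⁻ x, ENNReal.ofReal |f (α^[n] x)| ∂m :=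
        lintegral_const_mul' _ _ ENNReal.ofReal_ne_top
    _ ≤ ENNReal.ofReal (Real.exp (n * M)) * (C : ℝ≥0∞) ^ n := by
        grw [hC n (g := fun x => ENNReal.ofReal |f x|)
          hf.1.aestronglyMeasurable.norm.aemeasurable.ennreal_ofReal, hnorm, mul_one]

theorem weightedLintegral_ne_top (hα : ShiftBounded m α) (hρ : MemLp ρ ⊤ m) (hf : f ∈ UnitL1 m)
    (n : ℕ) : weightedLintegral m α ρ n f ≠ ⊤ := by
  obtain ⟨K, hK, hle⟩ := exists_weightedLintegral_le hα hρ n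
  exact ne_top_of_le_ne_top hK (hle f hf)

theorem weightedLintegral_convexComb_le (hα : Measure.QuasiMeasurePreserving α m m)
    {φ ψ : X → ℝ} (hφ : AEStronglyMeasurable φ m) (hψ : AEStronglyMeasurable ψ m)
    (hf : AEStronglyMeasurable f m) {t : ℝ} (ht0 : 0 ≤ t) (ht1 : t ≤ 1) (n : ℕ) :
    weightedLintegral m α (t • φ + (1 - t) • ψ) n f
      ≤ weightedLintegral m α φ n f ^ t * weightedLintegral m α ψ n f ^ (1 - t) := by
  calc weightedLintegral m α (t • φ + (1 - t) • ψ) n f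
      = ∫⁻ x, ENNReal.ofReal (Real.exp (birkhoff α φ n x) * |f (α^[n] x)|) ^ t
          * ENNReal.ofReal (Real.exp (birkhoff α ψ n x) * |f (α^[n] x)|) ^ (1 - t) ∂m := by
        refine lintegral_congr fun x => ?_
        rw [birkhoff_smul_add_smul, ofReal_exp_convexComb_mul _ _ (abs_nonneg _) ht0 ht1]
    _ ≤ _ := ENNReal.lintegral_mul_norm_pow_le
        (aestronglyMeasurable_weightedIntegrand hα hφ hf n).aemeasurable.ennreal_ofReal
        (aestronglyMeasurable_weightedIntegrand hα hψ hf n).aemeasurable.ennreal_ofReal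
        ht0 (sub_nonneg.2 ht1) (add_sub_cancel t 1)

end WeightedIntegral

section WeightedOpNorm

variable {m : Measure X} {α : X → X} {ρ : X → ℝ}

theorem weightedOpNorm_nonneg (n : ℕ) : 0 ≤ weightedOpNorm m α ρ n :=
  Real.sSup_nonneg <| by
    rintro _ ⟨f, -, rfl⟩
    exact integral_nonneg fun _ => by positivity

theorem weightedOpNorm_zero_measure (n : ℕ) : weightedOpNorm 0 α ρ n = 0 := by
  have hempty : UnitL1 (0 : Measure X) = ∅ :=
    Set.eq_empty_of_forall_notMem fun f hf => by simpa using hf.2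
  simp [weightedOpNorm, hempty]

theorem toReal_weightedLintegral_le_weightedOpNorm (hα : ShiftBounded m α) (hρ : MemLp ρ ⊤ m)
    {f : X → ℝ} (hf : f ∈ UnitL1 m) (n : ℕ) :
    (weightedLintegral m α ρ n f).toReal ≤ weightedOpNorm m α ρ n := by
  obtain ⟨K, hK, hle⟩ := exists_weightedLintegral_le hα hρ n
  have hqmp := hα.quasiMeasurePreserving
  refine le_csSup ⟨K.toReal, ?_⟩
    ⟨f, hf, (integral_eq_toReal_weightedLintegral hqmp hρ.1 hf.1.1 n).symm⟩
  rintro _ ⟨g, hg, rfl⟩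
  rw [integral_eq_toReal_weightedLintegral hqmp hρ.1 hg.1.1 n]
  exact ENNReal.toReal_mono hK (hle g hg)

theorem weightedOpNorm_pos [SigmaFinite m] [NeZero m] (hα : ShiftBounded m α)
    (hρ : MemLp ρ ⊤ m) (n : ℕ) : 0 < weightedOpNorm m α ρ n := by
  have hqmp := hα.quasiMeasurePreserving
  obtain ⟨f, hf, hf0⟩ := exists_mem_unitL1_comp_iterate_not_ae_zero hqmp n
  refine lt_of_lt_of_le ?_ (toReal_weightedLintegral_le_weightedOpNorm hα hρ hf n)
  exact ENNReal.toReal_pos (mt (weightedLintegral_eq_zero_iff hqmp hρ.1 hf.1.1 n).1 hf0)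
    (weightedLintegral_ne_top hα hρ hf n)

theorem weightedOpNorm_convexComb_le (hα : ShiftBounded m α) {φ ψ : X → ℝ} (hφ : MemLp φ ⊤ m)
    (hψ : MemLp ψ ⊤ m) {t : ℝ} (ht0 : 0 ≤ t) (ht1 : t ≤ 1) (n : ℕ) :
    weightedOpNorm m α (t • φ + (1 - t) • ψ) n
      ≤ weightedOpNorm m α φ n ^ t * weightedOpNorm m α ψ n ^ (1 - t) := by
  have hqmp := hα.quasiMeasurePreserving
  refine Real.sSup_le ?_ (mul_nonneg (Real.rpow_nonneg (weightedOpNorm_nonneg n) t)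
    (Real.rpow_nonneg (weightedOpNorm_nonneg n) (1 - t)))
  rintro _ ⟨f, hf, rfl⟩
  have hφ_ne_top := weightedLintegral_ne_top hα hφ hf n
  have hψ_ne_top := weightedLintegral_ne_top hα hψ hf n
  rw [integral_eq_toReal_weightedLintegral hqmp
    ((hφ.const_smul t).add (hψ.const_smul (1 - t))).1 hf.1.1 n]
  calc (weightedLintegral m α (t • φ + (1 - t) • ψ) n f).toReal
      ≤ (weightedLintegral m α φ n f ^ t * weightedLintegral m α ψ n f ^ (1 - t)).toReal :=
        ENNReal.toReal_mono (by finiteness)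
          (weightedLintegral_convexComb_le hqmp hφ.1 hψ.1 hf.1.1 ht0 ht1 n)
    _ = (weightedLintegral m α φ n f).toReal ^ t
          * (weightedLintegral m α ψ n f).toReal ^ (1 - t) := by
        rw [ENNReal.toReal_mul, ENNReal.toReal_rpow, ENNReal.toReal_rpow]
    _ ≤ weightedOpNorm m α φ n ^ t * weightedOpNorm m α ψ n ^ (1 - t) := by
        gcongr ?_ ^ t * ?_ ^ (1 - t)
        · exact Real.rpow_nonneg (weightedOpNorm_nonneg n) t
        · exact toReal_weightedLintegral_le_weightedOpNorm hα hφ hf n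
        · exact toReal_weightedLintegral_le_weightedOpNorm hα hψ hf n

theorem log_weightedOpNorm_convexComb_le [SigmaFinite m] (hα : ShiftBounded m α) {φ ψ : X → ℝ}
    (hφ : MemLp φ ⊤ m) (hψ : MemLp ψ ⊤ m) {t : ℝ} (ht0 : 0 ≤ t) (ht1 : t ≤ 1) (n : ℕ) :
    Real.log (weightedOpNorm m α (t • φ + (1 - t) • ψ) n)
      ≤ t * Real.log (weightedOpNorm m α φ n) + (1 - t) * Real.log (weightedOpNorm m α ψ n) := by
  rcases eq_zero_or_neZero m with rfl | _
  · simp [weightedOpNorm_zero_measure]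
  have hφpos := weightedOpNorm_pos hα hφ n
  have hψpos := weightedOpNorm_pos hα hψ n
  calc Real.log (weightedOpNorm m α (t • φ + (1 - t) • ψ) n)
      ≤ Real.log (weightedOpNorm m α φ n ^ t * weightedOpNorm m α ψ n ^ (1 - t)) :=
        Real.log_le_log (weightedOpNorm_pos hα ((hφ.const_smul t).add (hψ.const_smul (1 - t))) n)
          (weightedOpNorm_convexComb_le hα hφ hψ ht0 ht1 n)
    _ = t * Real.log (weightedOpNorm m α φ n) + (1 - t) * Real.log (weightedOpNorm m α ψ n) := by
        rw [Real.log_mul (by positivity) (by positivity), Real.log_rpow hφpos, Real.log_rpow hψpos]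

end WeightedOpNorm

/-- The function `φ ↦ λ(φ)` (the logarithm of the spectral radius of the weighted shift
operator `A_φ`) is convex on `L^∞(X,m)`. -/
theorem lambda_convex
    (m : Measure X) [SigmaFinite m] (α : X → X) (hα : ShiftBounded m α)
    (φ ψ : X → ℝ) (hφ : MemLp φ ⊤ m) (hψ : MemLp ψ ⊤ m)
    (t : ℝ) (ht0 : 0 ≤ t) (ht1 : t ≤ 1) (lφ lψ l : ℝ)
    (hφlim : Tendsto (fun n : ℕ => Real.log (weightedOpNorm m α φ n) / n) atTop (𝓝 lφ))
    (hψlim : Tendsto (fun n : ℕ => Real.log (weightedOpNorm m α ψ n) / n) atTop (𝓝 lψ))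
    (hlim : Tendsto (fun n : ℕ =>
        Real.log (weightedOpNorm m α (t • φ + (1 - t) • ψ) n) / n) atTop (𝓝 l)) :
    l ≤ t * lφ + (1 - t) * lψ := by
  have hdiv : ∀ n : ℕ, Real.log (weightedOpNorm m α (t • φ + (1 - t) • ψ) n) / n
      ≤ t * (Real.log (weightedOpNorm m α φ n) / n)
        + (1 - t) * (Real.log (weightedOpNorm m α ψ n) / n) := fun n => by
    rw [mul_div_assoc', mul_div_assoc', ← add_div]
    exact div_le_div_of_nonneg_right (log_weightedOpNorm_convexComb_le hα hφ hψ ht0 ht1 n)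
      n.cast_nonneg
  exact le_of_tendsto_of_tendsto' hlim ((hφlim.const_mul t).add (hψlim.const_mul (1 - t))) hdiv

end TEntropyPaper
end
end

section
/- For every μ ∈ M(X,m) one has τ(μ) ≤ λ(0), where λ(0) = lim_{n→∞} (1/n) ln‖Aⁿ‖ is the logarithm of the spectral radius of the unweighted shift A. In particular, if the measure m is α-invariant then τ(μ) ≤ 0 for every μ ∈ M(X,m). -/
open MeasureTheory Filter Topology
open scoped Classical ENNReal NNReal

noncomputable section

namespace TEntropyPaper

variable {X : Type*} [MeasurableSpace X]

/-! Bound `τ` from above by the trivial partition of unity `{1}`: for it the supremum in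
`τ_n(μ, {1})` is `ln sup_{‖f‖₁ = 1} ‖f ∘ αⁿ‖₁ = ln ‖Aⁿ‖`, so `τ(μ) ≤ ln ‖Aⁿ‖ / n` for every `n`,
and letting `n → ∞` gives `τ(μ) ≤ λ(0)`. If `m` is `α`-invariant, already `‖A‖ ≤ 1`. -/

section CompositionBound

variable {m : Measure X} {α : X → X} {C : ℝ≥0∞}

lemma map_le_smul_of_preimage_le (hα : Measurable α)
    (hC : ∀ s : Set X, MeasurableSet s → m (α ⁻¹' s) ≤ C * m s) :
    m.map α ≤ C • m :=
  Measure.le_iff.2 fun s hs => by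
    rw [Measure.map_apply hα hs, Measure.smul_apply, smul_eq_mul]
    exact hC s hs

lemma map_iterate_le_pow_smul (hα : Measurable α) (hmap : m.map α ≤ C • m) (n : ℕ) :
    m.map α^[n] ≤ C ^ n • m := by
  induction n with
  | zero => simp
  | succ n ih =>
    calc m.map α^[n + 1] = (m.map α).map α^[n] := by
          rw [Measure.map_map (hα.iterate n) hα, Function.iterate_succ]
      _ ≤ (C • m).map α^[n] := Measure.map_mono hmap (hα.iterate n)
      _ = C • m.map α^[n] := Measure.map_smul _ _ _
      _ ≤ C • (C ^ n • m) := by gcongr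
      _ = C ^ (n + 1) • m := by rw [smul_smul, pow_succ']

lemma integral_abs_comp_iterate_le {C : ℝ≥0} (hα : Measurable α)
    (hmap : m.map α ≤ (C : ℝ≥0∞) • m) (n : ℕ) {f : X → ℝ} (hf : Integrable f m) :
    ∫ x, |f (α^[n] x)| ∂m ≤ (C : ℝ) ^ n * ∫ x, |f x| ∂m := by
  have hmapn := map_iterate_le_pow_smul hα hmap n
  have hf' : AEStronglyMeasurable (fun x => |f x|) (m.map α^[n]) :=
    hf.abs.aestronglyMeasurable.mono_ac (Measure.absolutelyContinuous_of_le_smul hmapn)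
  calc ∫ x, |f (α^[n] x)| ∂m = ∫ x, |f x| ∂(m.map α^[n]) :=
        (integral_map (hα.iterate n).aemeasurable hf').symm
    _ ≤ ∫ x, |f x| ∂((C : ℝ≥0∞) ^ n • m) :=
        integral_mono_measure hmapn (ae_of_all _ fun x => abs_nonneg _)
          (hf.abs.smul_measure (by simp))
    _ = (C : ℝ) ^ n * ∫ x, |f x| ∂m := by
        rw [integral_smul_measure, smul_eq_mul, ENNReal.toReal_pow, ENNReal.coe_toReal]

end CompositionBound

lemma wInt_one (m : Measure X) (α : X → X) (n : ℕ) (f : X → ℝ) :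
    wInt m α n (fun _ => 1) f = ∫ x, |f (α^[n] x)| ∂m := by
  simp [wInt]

lemma weightedOpNorm_zero (m : Measure X) (α : X → X) (n : ℕ) :
    weightedOpNorm m α (fun _ => 0) n =
      sSup {r : ℝ | ∃ f ∈ UnitL1 m, r = ∫ x, |f (α^[n] x)| ∂m} := by
  simp [weightedOpNorm, birkhoff]

lemma isPartUnity_singleton_one (m : Measure X) :
    IsPartUnity m ({fun _ => (1 : ℝ)} : Finset (X → ℝ)) := by
  refine ⟨fun g hg => ?_, ae_of_all _ fun x => by simp⟩
  rw [Finset.mem_singleton.1 hg]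
  exact ⟨memLp_top_const 1, ae_of_all _ fun x => zero_le_one⟩

lemma tauN_le_log_of_forall_wInt_one_le {m : Measure X} {α : X → X} (μ : PosFunctional m)
    {n : ℕ} {b : ℝ} (hb : ∀ f ∈ UnitL1 m, wInt m α n (fun _ => 1) f ≤ b) :
    tauN m α μ n ≤ (Real.log b : EReal) := by
  refine (iInf₂_le _ (isPartUnity_singleton_one m)).trans ?_
  unfold tauND tauNDW
  split_ifs
  · exact bot_le
  refine iSup₂_le fun f hf => ?_
  simp only [Finset.sum_singleton, tauTermR, μ.map_one', one_ne_zero, if_false, one_mul, div_one]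
  split_ifs with h0
  · exact bot_le
  have hpos : 0 < wInt m α n (fun _ => 1) f :=
    (integral_nonneg fun x => by positivity).lt_of_ne' h0
  rw [EReal.coe_le_coe_iff]
  exact Real.log_le_log hpos (hb f hf)

lemma tauN_le_log_weightedOpNorm {m : Measure X} {α : X → X} (hα : ShiftBounded m α)
    (μ : PosFunctional m) (n : ℕ) :
    tauN m α μ n ≤ (Real.log (weightedOpNorm m α (fun _ => 0) n) : EReal) := by
  obtain ⟨hmeas, C, hC⟩ := hα
  have hmap := map_le_smul_of_preimage_le hmeas hC
  have hbdd : ∀ f ∈ UnitL1 m, ∫ x, |f (α^[n] x)| ∂m ≤ (C : ℝ) ^ n := fun f hf => by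
    simpa [hf.2] using integral_abs_comp_iterate_le hmeas hmap n hf.1
  refine tauN_le_log_of_forall_wInt_one_le μ fun f hf => ?_
  rw [wInt_one, weightedOpNorm_zero]
  exact le_csSup ⟨(C : ℝ) ^ n, by rintro r ⟨g, hg, rfl⟩; exact hbdd g hg⟩ ⟨f, hf, rfl⟩

lemma tEntropy_le_of_tauN_le {m : Measure X} {α : X → X} {μ : PosFunctional m} {n : ℕ}
    (hn : 0 < n) {L : ℝ} (h : tauN m α μ n ≤ L) :
    tEntropy m α μ ≤ ((L / n : ℝ) : EReal) :=
  calc tEntropy m α μ ≤ (((n : ℝ)⁻¹ : ℝ) : EReal) * tauN m α μ n :=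
        iInf_le (fun k : {k : ℕ // 0 < k} => ((((k : ℕ) : ℝ)⁻¹ : ℝ) : EReal) * tauN m α μ k)
          ⟨n, hn⟩
    _ ≤ (((n : ℝ)⁻¹ : ℝ) : EReal) * L :=
        mul_le_mul_of_nonneg_left h (EReal.coe_nonneg.2 (by positivity))
    _ = ((L / n : ℝ) : EReal) := by rw [← EReal.coe_mul, inv_mul_eq_div]

theorem tEntropy_le_lambda_zero_general
    (m : Measure X) (α : X → X) (hα : ShiftBounded m α) (lam0 : ℝ)
    (hlam0 : Tendsto (fun n : ℕ => Real.log (weightedOpNorm m α (fun _ => 0) n) / n)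
      atTop (𝓝 lam0)) :
    (∀ μ : PosFunctional m, tEntropy m α μ ≤ (lam0 : EReal)) ∧
      (MeasurePreserving α m m → ∀ μ : PosFunctional m, tEntropy m α μ ≤ (0 : EReal)) := by
  refine ⟨fun μ => ?_, fun hmp μ => ?_⟩
  · refine ge_of_tendsto (EReal.tendsto_coe.2 hlam0) ?_
    filter_upwards [eventually_gt_atTop 0] with n hn
    exact tEntropy_le_of_tauN_le hn (tauN_le_log_weightedOpNorm hα μ n)
  · have hmap : m.map α ≤ ((1 : ℝ≥0) : ℝ≥0∞) • m := by simp [hmp.map_eq]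
    have hnorm : ∀ f ∈ UnitL1 m, wInt m α 1 (fun _ => 1) f ≤ 1 := fun f hf => by
      simpa [wInt_one, hf.2] using integral_abs_comp_iterate_le hmp.measurable hmap 1 hf.1
    simpa using tEntropy_le_of_tauN_le one_pos (tauN_le_log_of_forall_wInt_one_le μ hnorm)

/-- For every `μ ∈ M(X,m)` one has `τ(μ) ≤ λ(0)`, the logarithm of the spectral radius
of the unweighted shift operator `A`.  In particular, if `m` is `α`-invariant then
`τ(μ) ≤ 0` for every `μ ∈ M(X,m)`. -/
theorem tEntropy_le_lambda_zero
    (m : Measure X) [SigmaFinite m] (α : X → X) (hα : ShiftBounded m α) (lam0 : ℝ)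
    (hlam0 : Tendsto (fun n : ℕ => Real.log (weightedOpNorm m α (fun _ => 0) n) / n)
      atTop (𝓝 lam0)) :
    (∀ μ : PosFunctional m, tEntropy m α μ ≤ (lam0 : EReal)) ∧
      (MeasurePreserving α m m → ∀ μ : PosFunctional m, tEntropy m α μ ≤ (0 : EReal)) :=
  tEntropy_le_lambda_zero_general m α hα lam0 hlam0

end TEntropyPaper
end
end
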